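/- Let m ∈ ℕ, let Σ̂ > 0 and ψ ∈ ℝ, let p, q ∈ ℝᵐ, and let ψ_t, ψ₂, Σ̂_t, Σ̂₂ ∈ ℝ. Write v_τ := ∂_τ v(Σ̂,ψ), v_x := ∂_x v(Σ̂,ψ), v_{τx} := ∂_τ∂_x v(Σ̂,ψ), v_{ττ} := ∂²_τ v(Σ̂,ψ), v_{xx} := ∂²_x v(Σ̂,ψ), which exist. Assume (i) ψ_t + (1/2)(ψ₂ + |p|²) = 0, and (ii) (v_τ · Σ̂_t + v_x · ψ_t) + (1/2)(2 v_{τx} · ⟨q,p⟩ + v_τ · Σ̂₂ + v_{ττ} · |q|² + v_{xx} · |p|² + v_x · ψ₂) = 0, where ⟨·,·⟩ and |·| denote the Euclidean inner product and norm on ℝᵐ. Then the total implied variance equation holds: Σ̂_t + (1/2)(⟨q,p⟩ + Σ̂₂) − (1/16 + 1/(4Σ̂)) · |q|² + |p − (ψ/(2Σ̂)) q|² = 0. -/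

import Mathlib

open MeasureTheory

/-- Standard normal cumulative distribution function. -/
noncomputable def stdN (y : ℝ) : ℝ :=
  ∫ u in Set.Iio y, Real.exp (-u ^ 2 / 2) / Real.sqrt (2 * Real.pi)

/-- Standard normal density. -/
noncomputable def stdn (y : ℝ) : ℝ :=
  Real.exp (-y ^ 2 / 2) / Real.sqrt (2 * Real.pi)

/-- Unit-volatility Black–Scholes price in reduced variables. -/
noncomputable def bsv (τ x : ℝ) : ℝ :=
  Real.exp x * stdN (x / Real.sqrt τ + Real.sqrt τ / 2) -
    stdN (x / Real.sqrt τ - Real.sqrt τ / 2)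

/-!
Write `d± = x/√τ ± √τ/2`, so that `v = eˣ N(d₊) - N(d₋)`. The identity `eˣ n(d₊) = n(d₋)` makes
every Greek of `v` a multiple of the vega `v_τ = n(d₋)/(2√τ)` up to the delta `v_x`:
`v_xx = v_x + 2 v_τ`, `v_τx = v_τ (1/2 - x/τ)` and `v_ττ = v_τ (x²/(2τ²) - 1/8 - 1/(2τ))`.
Substituting these and (i) into (ii) leaves `v_τ` times the total implied variance equation,
and `v_τ > 0`.
-/

lemma hasDerivAt_integral_Iio {f : ℝ → ℝ} (hf : Integrable f) (hc : Continuous f) (y : ℝ) :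
    HasDerivAt (fun z => ∫ u in Set.Iio z, f u) (f y) y := by
  have hsplit : (fun z => ∫ u in Set.Iio z, f u) =
      fun z => (∫ u in Set.Iic (0 : ℝ), f u) + ∫ u in (0 : ℝ)..z, f u := by
    funext z
    rw [setIntegral_congr_set Iio_ae_eq_Iic,
      ← intervalIntegral.integral_Iic_sub_Iic hf.integrableOn hf.integrableOn]
    ring
  rw [hsplit]
  exact (intervalIntegral.integral_hasDerivAt_right hf.intervalIntegrable
    (hc.stronglyMeasurableAtFilter _ _) hc.continuousAt).const_add _

lemma stdn_pos (y : ℝ) : 0 < stdn y :=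
  div_pos (Real.exp_pos _) (Real.sqrt_pos.mpr (by positivity))

lemma integrable_stdn : Integrable stdn := by
  have hform : stdn = fun u => Real.exp (-(1 / 2) * u ^ 2) * (Real.sqrt (2 * Real.pi))⁻¹ := by
    funext u; rw [stdn, div_eq_mul_inv]; ring_nf
  rw [hform]
  exact (integrable_exp_neg_mul_sq (by norm_num)).mul_const _

lemma hasDerivAt_stdN (y : ℝ) : HasDerivAt stdN (stdn y) y :=
  hasDerivAt_integral_Iio integrable_stdn (by unfold stdn; fun_prop) y

lemma hasDerivAt_stdn (y : ℝ) : HasDerivAt stdn (-y * stdn y) y := by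
  have hexp : HasDerivAt (fun u : ℝ => -u ^ 2 / 2) (-y) y :=
    ((hasDerivAt_pow 2 y).neg.div_const 2).congr_deriv (by ring)
  refine (hexp.exp.div_const _).congr_deriv ?_
  rw [stdn]
  ring

lemma norm_sub_smul_sq {E : Type*} [NormedAddCommGroup E] [InnerProductSpace ℝ E]
    (p q : E) (c : ℝ) :
    ‖p - c • q‖ ^ 2 = ‖p‖ ^ 2 - 2 * c * inner ℝ q p + c ^ 2 * ‖q‖ ^ 2 := by
  rw [norm_sub_sq_real, real_inner_smul_right, norm_smul, real_inner_comm, mul_pow,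
    Real.norm_eq_abs, sq_abs]
  ring

namespace BlackScholes

noncomputable def dPlus (τ x : ℝ) : ℝ := x / Real.sqrt τ + Real.sqrt τ / 2

noncomputable def dMinus (τ x : ℝ) : ℝ := x / Real.sqrt τ - Real.sqrt τ / 2

noncomputable def delta (τ x : ℝ) : ℝ := Real.exp x * stdN (dPlus τ x)

noncomputable def vega (τ x : ℝ) : ℝ := stdn (dMinus τ x) / (2 * Real.sqrt τ)

variable {τ : ℝ}

lemma exp_mul_stdn_dPlus (hτ : 0 < τ) (x : ℝ) :
    Real.exp x * stdn (dPlus τ x) = stdn (dMinus τ x) := by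
  have hs : Real.sqrt τ ≠ 0 := (Real.sqrt_pos.mpr hτ).ne'
  rw [stdn, stdn, ← mul_div_assoc, ← Real.exp_add, dPlus, dMinus]
  congr 2
  field_simp
  ring

lemma vega_pos (hτ : 0 < τ) (x : ℝ) : 0 < vega τ x :=
  div_pos (stdn_pos _) (by positivity)

lemma hasDerivAt_dPlus_x (τ x : ℝ) :
    HasDerivAt (dPlus τ) (1 / Real.sqrt τ) x := by
  unfold dPlus
  simpa using ((hasDerivAt_id x).div_const (Real.sqrt τ)).add_const (Real.sqrt τ / 2)

lemma hasDerivAt_dMinus_x (τ x : ℝ) :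
    HasDerivAt (dMinus τ) (1 / Real.sqrt τ) x := by
  unfold dMinus
  simpa using ((hasDerivAt_id x).div_const (Real.sqrt τ)).sub_const (Real.sqrt τ / 2)

lemma hasDerivAt_div_sqrt (hτ : 0 < τ) (x : ℝ) :
    HasDerivAt (fun t => x / Real.sqrt t) (-(x / τ) / (2 * Real.sqrt τ)) τ := by
  have hs : Real.sqrt τ ≠ 0 := (Real.sqrt_pos.mpr hτ).ne'
  refine ((hasDerivAt_const τ x).div (Real.hasDerivAt_sqrt hτ.ne') hs).congr_deriv ?_
  field_simp
  rw [Real.sq_sqrt hτ.le]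
  ring

lemma hasDerivAt_dPlus_tau (hτ : 0 < τ) (x : ℝ) :
    HasDerivAt (fun t => dPlus t x) ((1 / 2 - x / τ) / (2 * Real.sqrt τ)) τ :=
  ((hasDerivAt_div_sqrt hτ x).add ((Real.hasDerivAt_sqrt hτ.ne').div_const 2)).congr_deriv
    (by ring)

lemma hasDerivAt_dMinus_tau (hτ : 0 < τ) (x : ℝ) :
    HasDerivAt (fun t => dMinus t x) ((-1 / 2 - x / τ) / (2 * Real.sqrt τ)) τ :=
  ((hasDerivAt_div_sqrt hτ x).sub ((Real.hasDerivAt_sqrt hτ.ne').div_const 2)).congr_deriv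
    (by ring)

lemma hasDerivAt_bsv_x (hτ : 0 < τ) (x : ℝ) : HasDerivAt (bsv τ) (delta τ x) x := by
  have h := ((Real.hasDerivAt_exp x).mul
    ((hasDerivAt_stdN _).comp x (hasDerivAt_dPlus_x τ x))).sub
      ((hasDerivAt_stdN _).comp x (hasDerivAt_dMinus_x τ x))
  refine h.congr_deriv ?_
  rw [delta, Function.comp_apply, ← exp_mul_stdn_dPlus hτ]
  ring

lemma hasDerivAt_bsv_tau (hτ : 0 < τ) (x : ℝ) :
    HasDerivAt (fun t => bsv t x) (vega τ x) τ := by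
  have h := (((hasDerivAt_stdN _).comp τ (hasDerivAt_dPlus_tau hτ x)).const_mul
    (Real.exp x)).sub ((hasDerivAt_stdN _).comp τ (hasDerivAt_dMinus_tau hτ x))
  refine h.congr_deriv ?_
  rw [vega, ← mul_assoc, exp_mul_stdn_dPlus hτ]
  field_simp
  ring

lemma hasDerivAt_delta_x (hτ : 0 < τ) (x : ℝ) :
    HasDerivAt (delta τ) (delta τ x + 2 * vega τ x) x := by
  have h := (Real.hasDerivAt_exp x).mul ((hasDerivAt_stdN _).comp x (hasDerivAt_dPlus_x τ x))
  refine h.congr_deriv ?_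
  have hs : Real.sqrt τ ≠ 0 := (Real.sqrt_pos.mpr hτ).ne'
  rw [delta, vega, Function.comp_apply, ← mul_assoc, exp_mul_stdn_dPlus hτ]
  field_simp

lemma hasDerivAt_delta_tau (hτ : 0 < τ) (x : ℝ) :
    HasDerivAt (fun t => delta t x) (vega τ x * (1 / 2 - x / τ)) τ := by
  have h := ((hasDerivAt_stdN _).comp τ (hasDerivAt_dPlus_tau hτ x)).const_mul (Real.exp x)
  refine h.congr_deriv ?_
  rw [vega, ← mul_assoc, exp_mul_stdn_dPlus hτ]
  ring

lemma hasDerivAt_vega_tau (hτ : 0 < τ) (x : ℝ) :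
    HasDerivAt (fun t => vega t x)
      (vega τ x * (x ^ 2 / (2 * τ ^ 2) - 1 / 8 - 1 / (2 * τ))) τ := by
  have hs : 0 < Real.sqrt τ := Real.sqrt_pos.mpr hτ
  have h := ((hasDerivAt_stdn _).comp τ (hasDerivAt_dMinus_tau hτ x)).div
    ((Real.hasDerivAt_sqrt hτ.ne').const_mul 2) (by positivity)
  refine h.congr_deriv ?_
  rw [vega, Function.comp_apply, dMinus]
  field_simp
  rw [Real.sq_sqrt hτ.le]
  ring

lemma deriv_bsv_x_eventuallyEq (hτ : 0 < τ) (x : ℝ) :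
    (fun t => deriv (bsv t) x) =ᶠ[nhds τ] fun t => delta t x := by
  filter_upwards [Ioi_mem_nhds hτ] with t ht
  exact (hasDerivAt_bsv_x ht x).deriv

lemma deriv_bsv_tau_eventuallyEq (hτ : 0 < τ) (x : ℝ) :
    (fun t => deriv (fun s => bsv s x) t) =ᶠ[nhds τ] fun t => vega t x := by
  filter_upwards [Ioi_mem_nhds hτ] with t ht
  exact (hasDerivAt_bsv_tau ht x).deriv

end BlackScholes

open BlackScholes

/-- The total implied variance equation: given the reduced future-price equation (i) and the
option pricing equation after the chain rule (ii), the total implied variance `Sig` satisfies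
the quasi-linear path-dependent PDE of Theorem 5.2. -/
theorem total_implied_variance_equation (m : ℕ) (Sig ψ : ℝ) (hSig : 0 < Sig)
    (p q : EuclideanSpace ℝ (Fin m)) (ψt ψ2 Sigt Sig2 : ℝ)
    (vτ vx vτx vττ vxx : ℝ)
    (hvτ : HasDerivAt (fun t => bsv t ψ) vτ Sig)
    (hvx : HasDerivAt (fun y => bsv Sig y) vx ψ)
    (hvτx : HasDerivAt (fun t => deriv (fun y => bsv t y) ψ) vτx Sig)
    (hvττ : HasDerivAt (fun t => deriv (fun s => bsv s ψ) t) vττ Sig)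
    (hvxx : HasDerivAt (fun y => deriv (fun z => bsv Sig z) y) vxx ψ)
    (hi : ψt + (1 / 2) * (ψ2 + ‖p‖ ^ 2) = 0)
    (hii : (vτ * Sigt + vx * ψt) +
      (1 / 2) * (2 * vτx * (inner ℝ q p : ℝ) + vτ * Sig2 + vττ * ‖q‖ ^ 2 +
        vxx * ‖p‖ ^ 2 + vx * ψ2) = 0) :
    Sigt + (1 / 2) * ((inner ℝ q p : ℝ) + Sig2) - (1 / 16 + 1 / (4 * Sig)) * ‖q‖ ^ 2 +
      ‖p - (ψ / (2 * Sig)) • q‖ ^ 2 = 0 := by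
  have hτ : vτ = vega Sig ψ := hvτ.unique (hasDerivAt_bsv_tau hSig ψ)
  have hx : vx = delta Sig ψ := hvx.unique (hasDerivAt_bsv_x hSig ψ)
  have hτx : vτx = vτ * (1 / 2 - ψ / Sig) := by
    rw [hτ]
    exact hvτx.unique
      ((hasDerivAt_delta_tau hSig ψ).congr_of_eventuallyEq (deriv_bsv_x_eventuallyEq hSig ψ))
  have hττ : vττ = vτ * (ψ ^ 2 / (2 * Sig ^ 2) - 1 / 8 - 1 / (2 * Sig)) := by
    rw [hτ]
    exact hvττ.unique
      ((hasDerivAt_vega_tau hSig ψ).congr_of_eventuallyEq (deriv_bsv_tau_eventuallyEq hSig ψ))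
  have hxx : vxx = vx + 2 * vτ := by
    rw [hτ, hx]
    refine hvxx.unique ?_
    rw [funext fun y => (hasDerivAt_bsv_x hSig y).deriv]
    exact hasDerivAt_delta_x hSig ψ
  have hreduced : vτ * (Sigt + (1 / 2) * ((inner ℝ q p : ℝ) + Sig2) -
      (1 / 16 + 1 / (4 * Sig)) * ‖q‖ ^ 2 + ‖p - (ψ / (2 * Sig)) • q‖ ^ 2) = 0 := by
    rw [norm_sub_smul_sq]
    linear_combination hii - vx * hi - (inner ℝ q p : ℝ) * hτx - (‖q‖ ^ 2 / 2) * hττ -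
      (‖p‖ ^ 2 / 2) * hxx
  exact (mul_eq_zero.mp hreduced).resolve_left (hτ ▸ vega_pos hSig ψ).ne'
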